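/- Let κ ∈ ℝ_{>0}^{6n} and a ∈ ℝ_{>0}^{3+3n}. Then a is a positive steady state of the mass-action system ẋ = S diag(κ) Φ(x), i.e., S diag(κ) Φ(a) = 0, if and only if there exists λ ∈ ℝ_{>0}^{3n} such that κ_j = (Eλ)_j / Φ(a)_j for all j = 1,…,6n, i.e., κ = κ(a,λ). -/

import Mathlib

open Finset

namespace Phos

noncomputable section

/-- Standard basis vector of `ℝ^N`, with `1`-based index `j`. -/
def e (N : ℕ) (j : ℕ) : Fin N → ℝ := fun m => if (m : ℕ) + 1 = j then 1 else 0

/-- Standard basis vector of `ℕ^N`, with `1`-based index `j`. -/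
def eN (N : ℕ) (j : ℕ) : Fin N → ℕ := fun m => if (m : ℕ) + 1 = j then 1 else 0

/-- The stoichiometric matrix `S` of the `n`-site sequential distributive
phosphorylation network.  For each `i = 1,…,n` the six columns `6(i−1)+1,…,6(i−1)+6`
are `e_{1+3i}−e_1−e_{3i−1}`, `e_1+e_{3i−1}−e_{1+3i}`, `e_1+e_{2+3i}−e_{1+3i}`,
`e_{3+3i}−e_3−e_{2+3i}`, `e_3+e_{2+3i}−e_{3+3i}`, `e_3+e_{3i−1}−e_{3+3i}`. -/
def Smat (n : ℕ) : Matrix (Fin (3*n+3)) (Fin (6*n)) ℝ :=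
  Matrix.of fun m r =>
    (![e (3*n+3) (1+3*((r : ℕ)/6+1)) - e (3*n+3) 1 - e (3*n+3) (3*((r : ℕ)/6+1)-1),
       e (3*n+3) 1 + e (3*n+3) (3*((r : ℕ)/6+1)-1) - e (3*n+3) (1+3*((r : ℕ)/6+1)),
       e (3*n+3) 1 + e (3*n+3) (2+3*((r : ℕ)/6+1)) - e (3*n+3) (1+3*((r : ℕ)/6+1)),
       e (3*n+3) (3+3*((r : ℕ)/6+1)) - e (3*n+3) 3 - e (3*n+3) (2+3*((r : ℕ)/6+1)),
       e (3*n+3) 3 + e (3*n+3) (2+3*((r : ℕ)/6+1)) - e (3*n+3) (3+3*((r : ℕ)/6+1)),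
       e (3*n+3) 3 + e (3*n+3) (3*((r : ℕ)/6+1)-1) - e (3*n+3) (3+3*((r : ℕ)/6+1))])
      ⟨(r : ℕ) % 6, Nat.mod_lt _ (by norm_num)⟩ m

/-- The rate exponent matrix `Y`: for each `i = 1,…,n` the six columns
`6(i−1)+1,…,6(i−1)+6` are `e_1+e_{3i−1}`, `e_{1+3i}`, `e_{1+3i}`,
`e_3+e_{2+3i}`, `e_{3+3i}`, `e_{3+3i}`. -/
def Ymat (n : ℕ) : Matrix (Fin (3*n+3)) (Fin (6*n)) ℕ :=
  Matrix.of fun m r =>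
    (![eN (3*n+3) 1 + eN (3*n+3) (3*((r : ℕ)/6+1)-1),
       eN (3*n+3) (1+3*((r : ℕ)/6+1)),
       eN (3*n+3) (1+3*((r : ℕ)/6+1)),
       eN (3*n+3) 3 + eN (3*n+3) (2+3*((r : ℕ)/6+1)),
       eN (3*n+3) (3+3*((r : ℕ)/6+1)),
       eN (3*n+3) (3+3*((r : ℕ)/6+1))])
      ⟨(r : ℕ) % 6, Nat.mod_lt _ (by norm_num)⟩ m

/-- The monomial map `Φ(x)_j = ∏ₘ xₘ^{Y_{mj}}`. -/
def Phi (n : ℕ) (x : Fin (3*n+3) → ℝ) : Fin (6*n) → ℝ :=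
  fun r => ∏ m, x m ^ (Ymat n m r)

/-- The conservation matrix `Z` (rows `z1, z2, z3`). -/
def Zmat (n : ℕ) : Matrix (Fin 3) (Fin (3*n+3)) ℝ :=
  Matrix.of fun r j =>
    if (r : ℕ) = 0 then (if (j : ℕ) % 3 = 0 then 1 else 0)
    else if (r : ℕ) = 1 then
      (if (j : ℕ) % 3 = 1 then 1 else if (j : ℕ) = 0 ∨ (j : ℕ) = 2 then -1 else 0)
    else (if (j : ℕ) % 3 = 2 then 1 else 0)

/-- The `6 × 3` block `E0`. -/
def E0 : Fin 6 → Fin 3 → ℝ :=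
  ![![1,0,1], ![1,0,0], ![0,0,1], ![0,1,1], ![0,1,0], ![0,0,1]]

/-- The block diagonal matrix `E` with `n` copies of `E0`. -/
def Emat (n : ℕ) : Matrix (Fin (6*n)) (Fin (3*n)) ℝ :=
  Matrix.of fun r c =>
    if (r : ℕ) / 6 = (c : ℕ) / 3 then
      E0 ⟨(r : ℕ) % 6, Nat.mod_lt _ (by norm_num)⟩ ⟨(c : ℕ) % 3, Nat.mod_lt _ (by norm_num)⟩
    else 0

/-- The matrix `L ∈ ℤ^{(3+3n)×3}`: row `1 = (1, n−1, −1)`, row `2 = (−1, −n, 0)`,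
row `3 = (1, n−2, −1)`, and for `i = 1,…,n` rows `1+3i` and `3+3i` equal
`(0, i−2, −1)` while row `2+3i = (−1, i−n, 0)`. -/
def Lmat (n : ℕ) : Matrix (Fin (3*n+3)) (Fin 3) ℤ :=
  Matrix.of fun j c =>
    if (j : ℕ) = 0 then ![1, (n : ℤ) - 1, -1] c
    else if (j : ℕ) = 1 then ![-1, -(n : ℤ), 0] c
    else if (j : ℕ) = 2 then ![1, (n : ℤ) - 2, -1] c
    else if (j : ℕ) % 3 = 1 then ![-1, (((j : ℕ) / 3 : ℕ) : ℤ) - (n : ℤ), 0] c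
    else ![0, (((j : ℕ) / 3 : ℕ) : ℤ) - 2, -1] c

/-- `g^L ∈ ℝ_{>0}^{3+3n}`, `(g^L)_j = g₁^{L_{j1}} g₂^{L_{j2}} g₃^{L_{j3}}`. -/
def gL (n : ℕ) (g : Fin 3 → ℝ) : Fin (3*n+3) → ℝ :=
  fun j => ∏ c, g c ^ (Lmat n j c)

/-- The coset condition map `Θ(g,a) = Z diag(a) (g^L − 𝟙)`. -/
def Theta (n : ℕ) (g : Fin 3 → ℝ) (a : Fin (3*n+3) → ℝ) : Fin 3 → ℝ :=
  (Zmat n).mulVec (fun j => a j * (gL n g j - 1))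

/-- The rate constants `κ(a,λ)_j = (Eλ)_j / Φ(a)_j`. -/
def kappaOf (n : ℕ) (a : Fin (3*n+3) → ℝ) (lam : Fin (3*n) → ℝ) : Fin (6*n) → ℝ :=
  fun r => (Emat n).mulVec lam r / Phi n a r

/-- `x` is a (positive) steady state of `ẋ = S diag(κ) Φ(x)`. -/
def isSteady (n : ℕ) (κ : Fin (6*n) → ℝ) (x : Fin (3*n+3) → ℝ) : Prop :=
  (Smat n).mulVec (fun r => κ r * Phi n x r) = 0

/-- The `1`-based component `a_j` of a vector `a ∈ ℝ^{3+3n}`. -/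
def av (n : ℕ) (a : Fin (3*n+3) → ℝ) (j : ℕ) : ℝ :=
  if h : j - 1 < 3*n+3 then a ⟨j - 1, h⟩ else 0

/-- `ω1 = Σ_{k=0}^n a_{1+3k}`. -/
def om1 (n : ℕ) (a : Fin (3*n+3) → ℝ) : ℝ := ∑ k ∈ Finset.range (n+1), av n a (1+3*k)

/-- `ω2 = −a₁ − a₃ + Σ_{k=0}^n a_{2+3k}`. -/
def om2 (n : ℕ) (a : Fin (3*n+3) → ℝ) : ℝ :=
  -(av n a 1) - av n a 3 + ∑ k ∈ Finset.range (n+1), av n a (2+3*k)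

/-- `ω3 = Σ_{k=0}^n a_{3+3k}`. -/
def om3 (n : ℕ) (a : Fin (3*n+3) → ℝ) : ℝ := ∑ k ∈ Finset.range (n+1), av n a (3+3*k)

/-- `Ω2(ξ) = Σ_{k=0}^n a_{2+3k} ξ^k`. -/
def Om2 (n : ℕ) (a : Fin (3*n+3) → ℝ) (ξ : ℝ) : ℝ :=
  ∑ k ∈ Finset.range (n+1), av n a (2+3*k) * ξ ^ k

/-- `Ω4(ξ) = Σ_{k=1}^n a_{1+3k} ξ^{k−1}`. -/
def Om4 (n : ℕ) (a : Fin (3*n+3) → ℝ) (ξ : ℝ) : ℝ :=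
  ∑ k ∈ Finset.Icc 1 n, av n a (1+3*k) * ξ ^ (k-1)

/-- `Ω6(ξ) = Σ_{k=1}^n a_{3+3k} ξ^{k−1}`. -/
def Om6 (n : ℕ) (a : Fin (3*n+3) → ℝ) (ξ : ℝ) : ℝ :=
  ∑ k ∈ Finset.Icc 1 n, av n a (3+3*k) * ξ ^ (k-1)

/-- `Δ(ξ) = (a₁/ω1)ξ − a₃/ω3`. -/
def Dlt (n : ℕ) (a : Fin (3*n+3) → ℝ) (ξ : ℝ) : ℝ :=
  av n a 1 / om1 n a * ξ - av n a 3 / om3 n a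

/-- `ξ* = (ω1 a₃)/(a₁ ω3)`. -/
def xistar (n : ℕ) (a : Fin (3*n+3) → ℝ) : ℝ :=
  om1 n a * av n a 3 / (av n a 1 * om3 n a)

/-- `F1(ξ) = Ω6(ξ)/ω3 − Ω4(ξ)/ω1`. -/
def F1 (n : ℕ) (a : Fin (3*n+3) → ℝ) (ξ : ℝ) : ℝ :=
  Om6 n a ξ / om3 n a - Om4 n a ξ / om1 n a

/-- `F3(ξ) = (a₁ξ/ω1)(Ω6(ξ)/ω3) − (a₃/ω3)(Ω4(ξ)/ω1)`. -/
def F3 (n : ℕ) (a : Fin (3*n+3) → ℝ) (ξ : ℝ) : ℝ :=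
  av n a 1 * ξ / om1 n a * (Om6 n a ξ / om3 n a) - av n a 3 / om3 n a * (Om4 n a ξ / om1 n a)

/-- `A(ξ) = (Ω4(ξ)+Ω6(ξ))Ω2(ξ)`. -/
def Ap (n : ℕ) (a : Fin (3*n+3) → ℝ) (ξ : ℝ) : ℝ := (Om4 n a ξ + Om6 n a ξ) * Om2 n a ξ

/-- `B(ξ) = (a₁ξ + a₃)Ω2(ξ) − ω2 ξ (Ω4(ξ)+Ω6(ξ))`. -/
def Bp (n : ℕ) (a : Fin (3*n+3) → ℝ) (ξ : ℝ) : ℝ :=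
  (av n a 1 * ξ + av n a 3) * Om2 n a ξ - om2 n a * ξ * (Om4 n a ξ + Om6 n a ξ)

/-- `C(ξ) = ξ(a₁ξ + a₃)(ω1+ω2+ω3)`. -/
def Cp (n : ℕ) (a : Fin (3*n+3) → ℝ) (ξ : ℝ) : ℝ :=
  ξ * (av n a 1 * ξ + av n a 3) * (om1 n a + om2 n a + om3 n a)

/-- `P(ξ) = A(ξ)Δ(ξ)² + B(ξ)Δ(ξ)F1(ξ) − C(ξ)F1(ξ)²`. -/
def Pp (n : ℕ) (a : Fin (3*n+3) → ℝ) (ξ : ℝ) : ℝ :=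
  Ap n a ξ * (Dlt n a ξ)^2 + Bp n a ξ * Dlt n a ξ * F1 n a ξ - Cp n a ξ * (F1 n a ξ)^2

/-- `θ(ξ) = 2C(ξ)F1(ξ) − Δ(ξ)[B(ξ) + (B(ξ)² + 4A(ξ)C(ξ))^{1/2}]`. -/
def thetaFun (n : ℕ) (a : Fin (3*n+3) → ℝ) (ξ : ℝ) : ℝ :=
  2 * Cp n a ξ * F1 n a ξ -
    Dlt n a ξ * (Bp n a ξ + Real.sqrt ((Bp n a ξ)^2 + 4 * Ap n a ξ * Cp n a ξ))

/-- `g1(ξ) = ξ^{1−n} F1(ξ)/Δ(ξ)`. -/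
def g1f (n : ℕ) (a : Fin (3*n+3) → ℝ) (ξ : ℝ) : ℝ :=
  ξ ^ ((1 : ℤ) - (n : ℤ)) * F1 n a ξ / Dlt n a ξ

/-- `g3(ξ) = ξ^{−1} F3(ξ)/Δ(ξ)`. -/
def g3f (n : ℕ) (a : Fin (3*n+3) → ℝ) (ξ : ℝ) : ℝ :=
  ξ⁻¹ * F3 n a ξ / Dlt n a ξ

/-- The candidate second steady state `b = diag(g^L) a` built from a zero `ξ`
of the determining equation, with `g = (g1(ξ), ξ, g3(ξ))`. -/
def bOf (n : ℕ) (a : Fin (3*n+3) → ℝ) (ξ : ℝ) : Fin (3*n+3) → ℝ :=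
  fun j => gL n ![g1f n a ξ, ξ, g3f n a ξ] j * a j

end

end Phos
namespace Phos

/-! With `v = diag(κ) Φ(a)`, which is positive, `a` is a steady state iff `S v = 0`, and
`κ = κ(a, λ)` iff `v = E λ`. So it suffices that the positive vectors of `ker S` are exactly the
`E λ` with `λ > 0`. Every column of `E` lies in `ker S`. Conversely, on each site the balance
equations of the two enzyme complexes give `v₁ = v₂ + v₃` and `v₄ = v₅ + v₆`. The balance
equations of the substrates `S₀, S₁, …` then give `v₃ = v₆` on every site, by induction along
the chain. Hence `v = E λ` with `λ = (v₂, v₅, v₃)` on each site. -/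

open Matrix

theorem mulVec_mul_eq_zero_iff_exists_eq_div {ι σ τ : Type*} [Fintype ι] [Fintype τ]
    {S : Matrix σ ι ℝ} {E : Matrix ι τ ℝ} (hSE : S * E = 0)
    (hker : ∀ v : ι → ℝ, (∀ r, 0 < v r) → S *ᵥ v = 0 → ∃ lam, (∀ c, 0 < lam c) ∧ E *ᵥ lam = v)
    {κ φ : ι → ℝ} (hκ : ∀ r, 0 < κ r) (hφ : ∀ r, 0 < φ r) :
    S *ᵥ (fun r => κ r * φ r) = 0 ↔
      ∃ lam : τ → ℝ, (∀ c, 0 < lam c) ∧ κ = fun r => (E *ᵥ lam) r / φ r := by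
  constructor
  · intro hS
    obtain ⟨lam, hlam, hE⟩ := hker _ (fun r => mul_pos (hκ r) (hφ r)) hS
    exact ⟨lam, hlam, funext fun r => by rw [hE, mul_div_cancel_right₀ _ (hφ r).ne']⟩
  · rintro ⟨lam, -, rfl⟩
    have : (fun r => (E *ᵥ lam) r / φ r * φ r) = E *ᵥ lam :=
      funext fun r => div_mul_cancel₀ _ (hφ r).ne'
    rw [this, mulVec_mulVec, hSE, zero_mulVec]

section Blocks

variable {k n : ℕ}

def blockEquiv (k n : ℕ) : Fin n × Fin k ≃ Fin (k * n) :=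
  finProdFinEquiv.trans (finCongr (Nat.mul_comm n k))

def blockIdx (i : Fin n) (s : Fin k) : Fin (k * n) := blockEquiv k n (i, s)

@[simp]
lemma blockIdx_val (i : Fin n) (s : Fin k) : (blockIdx i s : ℕ) = k * i + s := by
  simp only [blockIdx, blockEquiv, finProdFinEquiv, Equiv.trans_apply, Equiv.coe_fn_mk,
    finCongr_apply, Fin.cast_mk]
  ring

lemma blockIdx_val_div (i : Fin n) (s : Fin k) : (blockIdx i s : ℕ) / k = i := by
  rw [blockIdx_val, Nat.mul_add_div s.pos, Nat.div_eq_of_lt s.isLt, add_zero]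

lemma blockIdx_val_mod (i : Fin n) (s : Fin k) : (blockIdx i s : ℕ) % k = s := by
  rw [blockIdx_val, Nat.mul_add_mod, Nat.mod_eq_of_lt s.isLt]

lemma exists_eq_blockIdx (r : Fin (k * n)) : ∃ i s, r = blockIdx i s :=
  ⟨_, _, ((blockEquiv k n).apply_symm_apply r).symm⟩

lemma sum_eq_sum_blockIdx {M : Type*} [AddCommMonoid M] (f : Fin (k * n) → M) :
    ∑ r, f r = ∑ i, ∑ s, f (blockIdx i s) := by
  rw [← (blockEquiv k n).sum_comp, Fintype.sum_prod_type]; rfl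

end Blocks

lemma Smat_blockIdx (n : ℕ) (m : Fin (3*n+3)) (i : Fin n) (s : Fin 6) :
    Smat n m (blockIdx i s) =
    ![e (3*n+3) (1+3*(i+1)) - e (3*n+3) 1 - e (3*n+3) (3*(i+1)-1),
       e (3*n+3) 1 + e (3*n+3) (3*(i+1)-1) - e (3*n+3) (1+3*(i+1)),
       e (3*n+3) 1 + e (3*n+3) (2+3*(i+1)) - e (3*n+3) (1+3*(i+1)),
       e (3*n+3) (3+3*(i+1)) - e (3*n+3) 3 - e (3*n+3) (2+3*(i+1)),
       e (3*n+3) 3 + e (3*n+3) (2+3*(i+1)) - e (3*n+3) (3+3*(i+1)),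
       e (3*n+3) 3 + e (3*n+3) (3*(i+1)-1) - e (3*n+3) (3+3*(i+1))] s m := by
  simp only [Smat, of_apply, blockIdx_val_div, blockIdx_val_mod, Fin.eta]

lemma Emat_blockIdx (n : ℕ) (i j : Fin n) (s : Fin 6) (p : Fin 3) :
    Emat n (blockIdx i s) (blockIdx j p) = if i = j then E0 s p else 0 := by
  simp only [Emat, of_apply, blockIdx_val_div, blockIdx_val_mod, Fin.eta, Fin.val_inj]

lemma Emat_mulVec_blockIdx (n : ℕ) (lam : Fin (3*n) → ℝ) (i : Fin n) (s : Fin 6) :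
    (Emat n *ᵥ lam) (blockIdx i s) = ∑ p, E0 s p * lam (blockIdx i p) := by
  simp [mulVec, dotProduct, sum_eq_sum_blockIdx (k := 3), Emat_blockIdx]

lemma Smat_mulVec_apply (n : ℕ) (v : Fin (6*n) → ℝ) (m : Fin (3*n+3)) :
    (Smat n *ᵥ v) m = ∑ i : Fin n,
      ((v (blockIdx i 0) - v (blockIdx i 1) - v (blockIdx i 2)) * e (3*n+3) (1+3*(i+1)) m
      + (v (blockIdx i 3) - v (blockIdx i 4) - v (blockIdx i 5)) * e (3*n+3) (3+3*(i+1)) m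
      + (v (blockIdx i 1) + v (blockIdx i 2) - v (blockIdx i 0)) * e (3*n+3) 1 m
      + (v (blockIdx i 4) + v (blockIdx i 5) - v (blockIdx i 3)) * e (3*n+3) 3 m
      + (v (blockIdx i 1) + v (blockIdx i 5) - v (blockIdx i 0)) * e (3*n+3) (3*(i+1)-1) m
      + (v (blockIdx i 2) - v (blockIdx i 3) + v (blockIdx i 4)) * e (3*n+3) (2+3*(i+1)) m) := by
  refine (sum_eq_sum_blockIdx _).trans (sum_congr rfl fun i _ => ?_)
  simp only [Fin.sum_univ_six, Smat_blockIdx, Matrix.cons_val, Pi.add_apply, Pi.sub_apply]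
  ring

theorem Smat_mul_Emat (n : ℕ) : Smat n * Emat n = 0 := by
  refine ext_iff_mulVec.2 fun lam => funext fun m => ?_
  rw [← mulVec_mulVec, zero_mulVec, Smat_mulVec_apply]
  refine sum_eq_zero fun i _ => ?_
  simp only [Emat_mulVec_blockIdx, Fin.sum_univ_three, E0, Matrix.cons_val]
  ring

/- In `0`-based indices, species `3i+3` and `3i+5` are the kinase and phosphatase complexes of
site `i+1`, and species `3i+1` is the substrate carrying `i` phosphates. -/

lemma Smat_mulVec_kinaseComplex (n : ℕ) (v : Fin (6*n) → ℝ) (i : Fin n) :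
    (Smat n *ᵥ v) ⟨3*i+3, by omega⟩ = v (blockIdx i 0) - v (blockIdx i 1) - v (blockIdx i 2) := by
  rw [Smat_mulVec_apply, Fintype.sum_eq_single i fun j hj => ?_] <;>
  simp (disch := omega) only [e, if_pos, if_neg] <;> ring

lemma Smat_mulVec_phosphataseComplex (n : ℕ) (v : Fin (6*n) → ℝ) (i : Fin n) :
    (Smat n *ᵥ v) ⟨3*i+5, by omega⟩ = v (blockIdx i 3) - v (blockIdx i 4) - v (blockIdx i 5) := by
  rw [Smat_mulVec_apply, Fintype.sum_eq_single i fun j hj => ?_] <;>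
  simp (disch := omega) only [e, if_pos, if_neg] <;> ring

lemma Smat_mulVec_substrate_zero (n : ℕ) (v : Fin (6*n) → ℝ) (i : Fin n) (hi : (i : ℕ) = 0) :
    (Smat n *ᵥ v) ⟨1, by omega⟩ = v (blockIdx i 1) + v (blockIdx i 5) - v (blockIdx i 0) := by
  rw [Smat_mulVec_apply, Fintype.sum_eq_single i fun j hj => ?_] <;>
  simp (disch := omega) only [e, if_pos, if_neg] <;> ring

lemma Smat_mulVec_substrate_succ (n : ℕ) (v : Fin (6*n) → ℝ) (i j : Fin n)
    (hij : (j : ℕ) = i + 1) :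
    (Smat n *ᵥ v) ⟨3*j+1, by omega⟩ = v (blockIdx i 2) - v (blockIdx i 3) + v (blockIdx i 4)
      + v (blockIdx j 1) + v (blockIdx j 5) - v (blockIdx j 0) := by
  rw [Smat_mulVec_apply, Fintype.sum_eq_add i j (by omega) fun k hk => ?_] <;>
  simp (disch := omega) only [e, if_pos, if_neg] <;> ring

section Kernel

variable {n : ℕ} {v : Fin (6*n) → ℝ}

lemma catalytic_fluxes_eq_of_Smat_mulVec_eq_zero (hS : Smat n *ᵥ v = 0) (i : Fin n) :
    v (blockIdx i 5) = v (blockIdx i 2) := by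
  obtain ⟨k, hk⟩ := i
  induction k with
  | zero =>
    have hE := Smat_mulVec_kinaseComplex n v ⟨0, hk⟩
    have hS₀ := Smat_mulVec_substrate_zero n v ⟨0, hk⟩ rfl
    simp only [hS, Pi.zero_apply] at hE hS₀
    linarith
  | succ k ih =>
    have hE := Smat_mulVec_kinaseComplex n v ⟨k + 1, hk⟩
    have hF := Smat_mulVec_phosphataseComplex n v ⟨k, by omega⟩
    have hSk := Smat_mulVec_substrate_succ n v ⟨k, by omega⟩ ⟨k + 1, hk⟩ rfl
    simp only [hS, Pi.zero_apply] at hE hF hSk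
    linarith [ih (by omega)]

/- The rows of `E0` give `E λ = (λ₁ + λ₃, λ₁, λ₃, λ₂ + λ₃, λ₂, λ₃)` on each site, so `λ` is read
off from the fluxes of reactions `2, 5, 3` of that site. -/
def fluxParam (n : ℕ) (v : Fin (6*n) → ℝ) (c : Fin (3*n)) : ℝ :=
  v (blockIdx ((blockEquiv 3 n).symm c).1 (![1, 4, 2] ((blockEquiv 3 n).symm c).2))

lemma fluxParam_blockIdx (i : Fin n) (p : Fin 3) :
    fluxParam n v (blockIdx i p) = v (blockIdx i (![1, 4, 2] p)) := by
  simp [fluxParam, blockIdx]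

lemma fluxParam_pos (hv : ∀ r, 0 < v r) (c : Fin (3*n)) : 0 < fluxParam n v c := hv _

lemma Emat_mulVec_fluxParam (hS : Smat n *ᵥ v = 0) : Emat n *ᵥ fluxParam n v = v := by
  ext r
  obtain ⟨i, s, rfl⟩ := exists_eq_blockIdx r
  have hE := Smat_mulVec_kinaseComplex n v i
  have hF := Smat_mulVec_phosphataseComplex n v i
  have hcat := catalytic_fluxes_eq_of_Smat_mulVec_eq_zero hS i
  simp only [hS, Pi.zero_apply] at hE hF
  rw [Emat_mulVec_blockIdx]
  fin_cases s <;>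
    simp only [Fin.sum_univ_three, E0, fluxParam_blockIdx, Fin.reduceFinMk, Fin.zero_eta,
      Fin.mk_one, Matrix.cons_val] <;>
    linarith

end Kernel

theorem steady_state_iff_kappa_param_general (n : ℕ)
    (κ : Fin (6*n) → ℝ) (hκ : ∀ r, 0 < κ r)
    (a : Fin (3*n+3) → ℝ) (ha : ∀ j, 0 < a j) :
    isSteady n κ a ↔
      ∃ lam : Fin (3*n) → ℝ, (∀ c, 0 < lam c) ∧ κ = kappaOf n a lam :=
  mulVec_mul_eq_zero_iff_exists_eq_div (Smat_mul_Emat n)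
    (fun _ hv hS => ⟨_, fluxParam_pos hv, Emat_mulVec_fluxParam hS⟩) hκ
    (fun _ => prod_pos fun m _ => pow_pos (ha m) _)

/-- `a ∈ ℝ_{>0}^{3+3n}` is a positive steady state of
`ẋ = S diag(κ) Φ(x)` iff `κ = κ(a,λ)` for some `λ ∈ ℝ_{>0}^{3n}`. -/
theorem steady_state_iff_kappa_param (n : ℕ) (hn : 2 ≤ n)
    (κ : Fin (6*n) → ℝ) (hκ : ∀ r, 0 < κ r)
    (a : Fin (3*n+3) → ℝ) (ha : ∀ j, 0 < a j) :
    isSteady n κ a ↔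
      ∃ lam : Fin (3*n) → ℝ, (∀ c, 0 < lam c) ∧ κ = kappaOf n a lam :=
  steady_state_iff_kappa_param_general n κ hκ a ha

end Phos
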